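/- arXiv:0802.0261 — 2 statements merged into one kernel-verified Lean document; each statement's English description precedes it below -/
import Mathlib

section
/- For every ρ > 0 and every real x ≤ 0, setting w = −W_ρ(−x) = −((−x)·sinh ρ − 1)/((−x) + sinh ρ), one has w > x, and the geodesic γ(x, w) with ideal endpoints x and w is tangent to the hyperbolic disc B_ρ(i); that is, inf_{z ∈ γ(x,w)} dist(z, i) = ρ. -/
/-!
A point `u + iv` of the semicircle `γ(x, w)` satisfies `v² = (w - u)(u - x)`, and
`cosh dist(u + iv, i) = (u² + v² + 1) / (2v)`. Since
`(u² + v² + 1)(w - x) = (w - u)(x² + 1) + (u - x)(w² + 1)`, AM-GM gives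
`cosh dist(z, i) · (w - x) ≥ √((x² + 1)(w² + 1))` on `γ(x, w)`, with equality at one point.
Hence `γ(x, w)` is tangent to `B_ρ(i)` as soon as `(x² + 1)(w² + 1) = cosh² ρ · (w - x)²`,
and for `w = -W_ρ(-x)` this follows from `w - x = (x² + 1) / (sinh ρ - x)`,
`w² + 1 = (x² + 1)(sinh² ρ + 1) / (sinh ρ - x)²`.
-/

open UpperHalfPlane MeasureTheory

/-- The complete hyperbolic geodesic of the upper half-plane with ideal endpoints `a` and `b`:
the Euclidean semicircle `{z ∈ ℍ : |z − (a+b)/2| = |a−b|/2}`. -/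
noncomputable def geodesic (a b : ℝ) : Set ℍ :=
  {z : ℍ | ‖(z : ℂ) - (((a + b) / 2 : ℝ) : ℂ)‖ = |a - b| / 2}

/-- The geodesic `γ(a,b)` is tangent to the hyperbolic disc `B_ρ(i)`:
the infimum of the hyperbolic distance from points of the geodesic to `i` equals `ρ`. -/
def TangentToDisc (a b ρ : ℝ) : Prop :=
  sInf ((fun z : ℍ => dist z UpperHalfPlane.I) '' geodesic a b) = ρ

/-- The geodesic `γ(a,b)` intersects the closed hyperbolic disc `B̄_r(i)`. -/
def MeetsClosedDisc (a b r : ℝ) : Prop :=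
  ∃ z ∈ geodesic a b, dist z UpperHalfPlane.I ≤ r

lemma cosh_dist_I (z : ℍ) :
    Real.cosh (dist z I) = (z.re ^ 2 + z.im ^ 2 + 1) / (2 * z.im) := by
  simp [cosh_dist']

lemma mem_geodesic_iff {a b : ℝ} {z : ℍ} :
    z ∈ geodesic a b ↔ z.im ^ 2 = (b - z.re) * (z.re - a) := by
  rw [geodesic, Set.mem_ofPred_eq, ← sq_eq_sq₀ (norm_nonneg _) (by positivity), Complex.sq_norm,
    Complex.normSq_apply, div_pow, sq_abs]
  simp only [Complex.sub_re, Complex.sub_im, Complex.ofReal_re, Complex.ofReal_im, sub_zero,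
    coe_re, coe_im]
  constructor <;> intro h <;> linear_combination h

lemma sq_le_cosh_dist_I_mul_sq {x w : ℝ} {z : ℍ} (hz : z ∈ geodesic x w) :
    (x ^ 2 + 1) * (w ^ 2 + 1) ≤ (Real.cosh (dist z I) * (w - x)) ^ 2 := by
  rw [mem_geodesic_iff] at hz
  have hsum : (w - z.re) * (x ^ 2 + 1) + (z.re - x) * (w ^ 2 + 1)
      = (z.re ^ 2 + z.im ^ 2 + 1) * (w - x) := by
    linear_combination (x - w) * hz
  rw [cosh_dist_I, div_mul_eq_mul_div, div_pow, le_div_iff₀ (by positivity [z.im_pos])]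
  calc (x ^ 2 + 1) * (w ^ 2 + 1) * (2 * z.im) ^ 2
      = 4 * ((w - z.re) * (x ^ 2 + 1)) * ((z.re - x) * (w ^ 2 + 1)) := by
        rw [mul_pow, hz]; ring
    _ ≤ ((w - z.re) * (x ^ 2 + 1) + (z.re - x) * (w ^ 2 + 1)) ^ 2 := four_mul_le_sq_add _ _
    _ = _ := by rw [hsum]

lemma exists_mem_geodesic_cosh_dist_I_eq {x w C : ℝ} (hC : 0 < C)
    (hK : (x ^ 2 + 1) * (w ^ 2 + 1) = C ^ 2 * (w - x) ^ 2) :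
    ∃ z ∈ geodesic x w, Real.cosh (dist z I) = C := by
  have hD : 0 < x ^ 2 + w ^ 2 + 2 := by positivity
  have hwx : 0 < (w - x) ^ 2 :=
    pos_of_mul_pos_right (hK ▸ by positivity : 0 < C ^ 2 * (w - x) ^ 2) (sq_nonneg C)
  -- the point of the semicircle with `(w - u)(x² + 1) = (u - x)(w² + 1)`, where AM-GM is sharp
  set u := (x + w) * (x * w + 1) / (x ^ 2 + w ^ 2 + 2)
  set v := C * (w - x) ^ 2 / (x ^ 2 + w ^ 2 + 2)
  let z : ℍ := ⟨⟨u, v⟩, by positivity⟩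
  have hre : z.re = u := rfl
  have him : z.im = v := rfl
  refine ⟨z, mem_geodesic_iff.2 ?_, ?_⟩
  · rw [hre, him]
    simp only [u, v]
    field_simp
    linear_combination -(w - x) ^ 2 * hK
  · rw [cosh_dist_I, hre, him, div_eq_iff (by positivity)]
    simp only [u, v]
    field_simp
    linear_combination (2 * (x ^ 2 + w ^ 2 + 2) - (w - x) ^ 2) * hK

lemma tangentToDisc_of_sq_mul_sq_eq {x w ρ : ℝ} (hρ : 0 ≤ ρ) (hxw : x < w)
    (hK : (x ^ 2 + 1) * (w ^ 2 + 1) = Real.cosh ρ ^ 2 * (w - x) ^ 2) : TangentToDisc x w ρ := by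
  obtain ⟨z₀, hz₀, hcosh⟩ := exists_mem_geodesic_cosh_dist_I_eq (Real.cosh_pos ρ) hK
  refine IsLeast.csInf_eq ⟨⟨z₀, hz₀, Real.cosh_injOn dist_nonneg hρ hcosh⟩, ?_⟩
  rintro _ ⟨z, hz, rfl⟩
  have hsq := sq_le_cosh_dist_I_mul_sq hz
  rw [hK, ← mul_pow, pow_le_pow_iff_left₀ (by positivity [sub_pos.2 hxw])
    (by positivity [sub_pos.2 hxw]) two_ne_zero] at hsq
  have hcosh_le := le_of_mul_le_mul_right hsq (sub_pos.2 hxw)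
  rwa [Real.cosh_le_cosh, abs_of_nonneg hρ, abs_of_nonneg dist_nonneg] at hcosh_le

/-- For every ρ > 0 and every real x ≤ 0, setting
w = −W_ρ(−x) = −((−x)·sinh ρ − 1)/((−x) + sinh ρ), one has w > x, and the geodesic
γ(x, w) is tangent to the hyperbolic disc B_ρ(i). -/
theorem tangent_W_neg (ρ : ℝ) (hρ : 0 < ρ) (x : ℝ) (hx : x ≤ 0) :
    x < -((-x * Real.sinh ρ - 1) / (-x + Real.sinh ρ)) ∧
      TangentToDisc x (-((-x * Real.sinh ρ - 1) / (-x + Real.sinh ρ))) ρ := by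
  have hs : 0 < -x + Real.sinh ρ := by linarith [Real.sinh_pos_iff.2 hρ]
  have hw : -((-x * Real.sinh ρ - 1) / (-x + Real.sinh ρ))
      = (x * Real.sinh ρ + 1) / (-x + Real.sinh ρ) := by
    rw [← neg_div]; ring_nf
  have hxw : x < (x * Real.sinh ρ + 1) / (-x + Real.sinh ρ) := by
    rw [lt_div_iff₀ hs]; nlinarith [sq_nonneg x]
  rw [hw]
  refine ⟨hxw, tangentToDisc_of_sq_mul_sq_eq hρ.le hxw ?_⟩
  rw [Real.cosh_sq]
  field_simp
  ring
end

section
/- For every r > 0, every real x > sinh r, and every real y with y ≠ x, the geodesic γ(x,y) with ideal endpoints x and y intersects the closed hyperbolic disc B̄_r(i) if and only if U_r(x) ≤ y ≤ W_r(x); in particular for such x the set of such y is a bounded interval. -/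
open UpperHalfPlane MeasureTheory

/-!
Since `cosh (dist z i) = (‖z‖² + 1) / (2 Im z)` and `γ(a,b)` is the locus
`(Re z - a)(Re z - b) + (Im z)² = 0`, a sum-of-squares identity gives, on `γ(a,b)`,
`(cosh (dist z i) · (a - b))² = (a² + 1)(b² + 1) + (square vanishing at one point of γ(a,b))`.
Hence `γ(a,b)` meets `B̄_r(i)` iff `(a² + 1)(b² + 1) ≤ (a - b)² cosh² r`. Writing
`cosh² r = 1 + sinh² r`, the difference of the two sides factors into two linear forms in `y`
whose nonnegativity says `U_r(x) ≤ y` and `y ≤ W_r(x)`; they cannot both be negative, as a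
positive combination of them is positive.
-/

open Real

namespace UpperHalfPlane

theorem cosh_dist_I (z : ℍ) : cosh (dist z I) = (z.re ^ 2 + z.im ^ 2 + 1) / (2 * z.im) := by
  rw [cosh_dist', I_re, I_im]
  ring_nf

theorem mem_geodesic_iff {a b : ℝ} {z : ℍ} :
    z ∈ geodesic a b ↔ (z.re - a) * (z.re - b) + z.im ^ 2 = 0 := by
  rw [geodesic, Set.mem_ofPred_eq, ← sq_eq_sq₀ (norm_nonneg _) (by positivity), Complex.sq_norm,
    Complex.normSq_apply, div_pow, sq_abs]
  simp only [Complex.sub_re, Complex.sub_im, Complex.ofReal_re, Complex.ofReal_im, coe_re, coe_im]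
  constructor <;> intro h <;> linarith

theorem cosh_dist_I_mul_sub_sq_of_mem_geodesic {a b : ℝ} {z : ℍ} (hz : z ∈ geodesic a b) :
    (cosh (dist z I) * (a - b)) ^ 2 = (a ^ 2 + 1) * (b ^ 2 + 1) +
      (((a ^ 2 + b ^ 2 + 2) * z.re - (a + b) * (a * b + 1)) / (2 * z.im)) ^ 2 := by
  rw [mem_geodesic_iff] at hz
  have hv := z.im_pos
  rw [cosh_dist_I]
  field_simp
  linear_combination ((2 * ((a + b) * z.re - a * b + 1) + ((z.re - a) * (z.re - b) + z.im ^ 2)) *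
    (a - b) ^ 2 - 4 * (a ^ 2 + 1) * (b ^ 2 + 1)) * hz

theorem sq_add_one_mul_le_cosh_dist_I_mul_sub_sq {a b : ℝ} {z : ℍ} (hz : z ∈ geodesic a b) :
    (a ^ 2 + 1) * (b ^ 2 + 1) ≤ (cosh (dist z I) * (a - b)) ^ 2 := by
  rw [cosh_dist_I_mul_sub_sq_of_mem_geodesic hz]
  exact le_add_of_nonneg_right (sq_nonneg _)

theorem exists_mem_geodesic_cosh_dist_I_mul_sub_sq_eq {a b : ℝ} (hab : a ≠ b) :
    ∃ z ∈ geodesic a b, (cosh (dist z I) * (a - b)) ^ 2 = (a ^ 2 + 1) * (b ^ 2 + 1) := by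
  set S := a ^ 2 + b ^ 2 + 2
  set D := (a ^ 2 + 1) * (b ^ 2 + 1)
  have hS : 0 < S := by positivity
  have hD : 0 < D := by positivity
  have hv : 0 < |a - b| * √D / S := by
    have := sub_ne_zero.mpr hab
    positivity
  let z : ℍ := ⟨⟨(a + b) * (a * b + 1) / S, |a - b| * √D / S⟩, hv⟩
  have hz : z ∈ geodesic a b := by
    rw [mem_geodesic_iff]
    change ((a + b) * (a * b + 1) / S - a) * ((a + b) * (a * b + 1) / S - b) +
      (|a - b| * √D / S) ^ 2 = 0
    rw [div_pow, mul_pow, sq_abs, Real.sq_sqrt hD.le]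
    field_simp
    ring
  refine ⟨z, hz, ?_⟩
  rw [cosh_dist_I_mul_sub_sq_of_mem_geodesic hz]
  change _ + ((S * ((a + b) * (a * b + 1) / S) - _) / _) ^ 2 = _
  rw [mul_div_cancel₀ _ hS.ne', sub_self, zero_div, zero_pow two_ne_zero, add_zero]

end UpperHalfPlane

open UpperHalfPlane in
theorem meetsClosedDisc_iff {a b r : ℝ} (hr : 0 ≤ r) :
    MeetsClosedDisc a b r ↔ (a ^ 2 + 1) * (b ^ 2 + 1) ≤ ((a - b) * cosh r) ^ 2 := by
  constructor
  · rintro ⟨z, hz, hzr⟩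
    have : cosh (dist z I) ≤ cosh r := by
      rwa [cosh_le_cosh, abs_of_nonneg dist_nonneg, abs_of_nonneg hr]
    calc (a ^ 2 + 1) * (b ^ 2 + 1) ≤ (cosh (dist z I) * (a - b)) ^ 2 :=
          sq_add_one_mul_le_cosh_dist_I_mul_sub_sq hz
      _ ≤ ((a - b) * cosh r) ^ 2 := by
          rw [mul_comm, mul_pow, mul_pow]
          gcongr
  · intro h
    have hab : a ≠ b := by
      rintro rfl
      simp only [sub_self, zero_mul] at h
      nlinarith [sq_nonneg a]
    obtain ⟨z, hz, hzr⟩ := exists_mem_geodesic_cosh_dist_I_mul_sub_sq_eq hab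
    refine ⟨z, hz, ?_⟩
    have : cosh (dist z I) ≤ cosh r := by
      rw [← hzr, mul_comm, mul_pow, mul_pow] at h
      exact (pow_le_pow_iff_left₀ (cosh_pos _).le (cosh_pos _).le two_ne_zero).mp
        (le_of_mul_le_mul_left h (by positivity [sub_ne_zero.mpr hab]))
    rwa [cosh_le_cosh, abs_of_nonneg dist_nonneg, abs_of_nonneg hr] at this

theorem sq_add_one_mul_le_iff {s x y : ℝ} (hs : 0 < s) (hsx : s < x) :
    (x ^ 2 + 1) * (y ^ 2 + 1) ≤ (x - y) ^ 2 * (1 + s ^ 2) ↔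
      (x * s + 1) / (-x + s) ≤ y ∧ y ≤ (x * s - 1) / (x + s) := by
  set P := (x - s) * y + (x * s + 1)
  set Q := (x * s - 1) - (x + s) * y
  have hPQ : P * (x + s) + Q * (x - s) = 2 * s * (x ^ 2 + 1) := by ring
  rw [div_le_iff_of_neg (by linarith), le_div_iff₀ (by linarith), ← sub_nonneg,
    show (x - y) ^ 2 * (1 + s ^ 2) - (x ^ 2 + 1) * (y ^ 2 + 1) = P * Q by ring, mul_nonneg_iff]
  constructor
  · rintro (⟨hP, hQ⟩ | ⟨hP, hQ⟩)
    · constructor <;> linarith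
    · nlinarith [mul_nonpos_of_nonpos_of_nonneg hP (by linarith : 0 ≤ x + s),
        mul_nonpos_of_nonpos_of_nonneg hQ (by linarith : 0 ≤ x - s)]
  · rintro ⟨h₁, h₂⟩
    exact Or.inl ⟨by linarith, by linarith⟩

theorem meets_iff_of_sinh_lt_general (r : ℝ) (hr : 0 < r) (x : ℝ) (hx : Real.sinh r < x)
    (y : ℝ) :
    MeetsClosedDisc x y r ↔
      (x * Real.sinh r + 1) / (-x + Real.sinh r) ≤ y ∧
        y ≤ (x * Real.sinh r - 1) / (x + Real.sinh r) := by
  rw [meetsClosedDisc_iff hr.le, mul_pow, cosh_sq']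
  exact sq_add_one_mul_le_iff (sinh_pos_iff.mpr hr) hx

/-- For every r > 0, every real x > sinh r, and every real y ≠ x, the geodesic γ(x,y)
intersects the closed disc B̄_r(i) iff U_r(x) ≤ y ≤ W_r(x). -/
theorem meets_iff_of_sinh_lt (r : ℝ) (hr : 0 < r) (x : ℝ) (hx : Real.sinh r < x)
    (y : ℝ) (hy : y ≠ x) :
    MeetsClosedDisc x y r ↔
      (x * Real.sinh r + 1) / (-x + Real.sinh r) ≤ y ∧
        y ≤ (x * Real.sinh r - 1) / (x + Real.sinh r) :=
  meets_iff_of_sinh_lt_general r hr x hx y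
end
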